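/- arXiv:1507.08499 — 6 statements merged into one kernel-verified Lean document; each statement's English description precedes it below -/
import Mathlib

section
/- Let n be a positive integer (number of packets), P a positive integer (number of paths), and fix a path assignment p : Fin n → Fin P. For each path q let α_q : ℕ → ℝ be a strictly increasing function (α_q(s) is the arrival time of the packet sent in slot s of path q). For a given assignment, the packets sent on path q occupy slots 0, 1, …, m_q − 1 where m_q is the number of packets assigned to q, in an order specified by a bijection σ_q from the packets assigned to q onto {0, …, m_q − 1}; the in-order delivery time of packet k is Y_k(σ) = max over packets j ≤ k of α_{p(j)}(σ_{p(j)}(j)). Then for every family of bijections (σ_q)_q, the sum over k of Y_k(σ) is greater than or equal to the sum over k of Y_k(σ*), where σ* is the ascending assignment in which, on each path, packets with smaller index occupy smaller slots (i.e., each σ*_q is order-preserving on the set of packets assigned to q). -/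
/-! Fix a packet `k` and a packet `j ≤ k` on path `q`, and let `S` be the set of packets on `q`
with index at most `k`. Under the ascending order the slot of `j` is below `#S`, since every
smaller slot is taken by a packet of `S`. Under any order the slots of `S` are distinct, so
some packet of `S` occupies a slot at least `#S - 1`. As arrival times grow with the slot,
that packet arrives no earlier than `j` does under the ascending order; hence every term of
the sum dominates the corresponding ascending term. -/

open Finset

theorem exists_card_le_succ_of_injOn {ι : Type*} {s : Finset ι} (hs : s.Nonempty)
    {f : ι → ℕ} (hf : Set.InjOn f s) : ∃ i ∈ s, #s ≤ f i + 1 := by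
  by_contra! h
  have hmaps : Set.MapsTo f s (range (#s - 1)) := fun i hi =>
    mem_range.2 (by have := h i hi; omega)
  have hle := card_le_card_of_injOn f hmaps hf
  rw [card_range] at hle
  have := hs.card_pos
  omega

theorem lt_card_filter_le_of_strictMonoOn {ι : Type*} [LinearOrder ι] {A : Finset ι}
    {f : ι → ℕ} {m : ℕ} (hf : StrictMonoOn f A) (hsurj : Set.SurjOn f A (Set.Iio m))
    {j : ι} (hj : j ∈ A) (hjm : f j < m) : f j < #{i ∈ A | i ≤ j} := by
  have hsub : Iic (f j) ⊆ {i ∈ A | i ≤ j}.image f := fun s hs => by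
    have hs : s ≤ f j := mem_Iic.1 hs
    obtain ⟨i, hiA, rfl⟩ := hsurj (show s < m by omega)
    exact mem_image_of_mem f (mem_filter.2 ⟨hiA, (hf.le_iff_le hiA hj).1 hs⟩)
  calc f j < #(Iic (f j)) := by simp
    _ ≤ #({i ∈ A | i ≤ j}.image f) := card_le_card hsub
    _ ≤ #{i ∈ A | i ≤ j} := card_image_le

theorem ascending_order_minimises_sum_delivery_time_general
    (n P : ℕ)
    (p : Fin n → Fin P) (α : Fin P → ℕ → ℝ)
    (hα : ∀ q : Fin P, StrictMono (α q))
    (σ σstar : Fin n → ℕ)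
    (hσ : ∀ q : Fin P,
      Set.BijOn σ {k : Fin n | p k = q}
        {s : ℕ | s < (Finset.univ.filter (fun k : Fin n => p k = q)).card})
    (hσstar : ∀ q : Fin P,
      Set.BijOn σstar {k : Fin n | p k = q}
        {s : ℕ | s < (Finset.univ.filter (fun k : Fin n => p k = q)).card})
    (hmono : ∀ q : Fin P, ∀ j k : Fin n,
      p j = q → p k = q → j < k → σstar j < σstar k) :
    (∑ k : Fin n,
        (Finset.Iic k).sup' ⟨k, Finset.mem_Iic.2 le_rfl⟩
          (fun j => α (p j) (σ j)))
      ≥ ∑ k : Fin n,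
          (Finset.Iic k).sup' ⟨k, Finset.mem_Iic.2 le_rfl⟩
            (fun j => α (p j) (σstar j)) := by
  refine sum_le_sum fun k _ => sup'_le _ _ fun j hj => ?_
  have hjk : j ≤ k := mem_Iic.1 hj
  set q := p j
  set A : Finset (Fin n) := {i | p i = q}
  set S : Finset (Fin n) := {i ∈ A | i ≤ k}
  have hA : (A : Set (Fin n)) = {i | p i = q} := coe_filter_univ _
  have hjA : j ∈ A := by simp [A, q]
  have hslot : σstar j < #S := by
    refine (lt_card_filter_le_of_strictMonoOn (m := #A) ?_ ?_ hjA ?_).trans_le ?_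
    · exact fun a ha b hb => hmono q a b (by simpa [A] using ha) (by simpa [A] using hb)
    · exact hA ▸ (hσstar q).surjOn
    · exact (hσstar q).mapsTo rfl
    · exact card_le_card (monotone_filter_right A fun _ _ hij => hij.trans hjk)
  have hσS : Set.InjOn σ S := (hσ q).injOn.mono (hA ▸ coe_subset.2 (filter_subset _ A))
  obtain ⟨i, hiS, hcard⟩ := exists_card_le_succ_of_injOn (s := S) ⟨j, mem_filter.2 ⟨hjA, hjk⟩⟩ hσS
  obtain ⟨hiA, hik⟩ := mem_filter.1 hiS
  calc α q (σstar j) ≤ α q (σ i) := (hα q).monotone (by omega)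
    _ = α (p i) (σ i) := by rw [(mem_filter.1 hiA).2]
    _ ≤ _ := le_sup' (fun j => α (p j) (σ j)) (mem_Iic.2 hik)

/-- Lemma 1 of the paper: on each path, transmitting packets in ascending index
order minimises the total in-order delivery delay. `α q s` is the arrival
time of the packet sent in slot `s` of path `q` (strictly increasing in `s`,
i.e. no reordering within a path). `σ k` is the slot in which packet `k` is sent
on its path `p k`; on each path the slots used are `0, …, m_q − 1` where `m_q`
is the number of packets assigned to path `q`. -/
theorem ascending_order_minimises_sum_delivery_time
    (n P : ℕ) (hn : 0 < n) (hP : 0 < P)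
    (p : Fin n → Fin P) (α : Fin P → ℕ → ℝ)
    (hα : ∀ q : Fin P, StrictMono (α q))
    (σ σstar : Fin n → ℕ)
    (hσ : ∀ q : Fin P,
      Set.BijOn σ {k : Fin n | p k = q}
        {s : ℕ | s < (Finset.univ.filter (fun k : Fin n => p k = q)).card})
    (hσstar : ∀ q : Fin P,
      Set.BijOn σstar {k : Fin n | p k = q}
        {s : ℕ | s < (Finset.univ.filter (fun k : Fin n => p k = q)).card})
    (hmono : ∀ q : Fin P, ∀ j k : Fin n,
      p j = q → p k = q → j < k → σstar j < σstar k) :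
    (∑ k : Fin n,
        (Finset.Iic k).sup' ⟨k, Finset.mem_Iic.2 le_rfl⟩
          (fun j => α (p j) (σ j)))
      ≥ ∑ k : Fin n,
          (Finset.Iic k).sup' ⟨k, Finset.mem_Iic.2 le_rfl⟩
            (fun j => α (p j) (σstar j)) :=
  ascending_order_minimises_sum_delivery_time_general n P p α hα σ σstar hσ hσstar hmono
end

section
/- Let n be a positive integer and α : Fin n → ℝ a strictly increasing function. For every permutation σ of Fin n, the sum over k ∈ Fin n of max{α(σ(q)) : q ≤ k} is greater than or equal to the sum over k ∈ Fin n of α(k) (which equals the sum of prefix maxima under the identity permutation, since α is increasing). -/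
/-! Pigeonhole: the `k + 1` slots `q ≤ k` cannot all carry packets with index `< k`, so some
slot `q ≤ k` carries a packet of index at least `k`. Hence the `k`-th prefix maximum is at least
`α k` for every `k`, and the bound is summed termwise. -/

open Finset

theorem Fin.exists_le_apply_of_injective {n : ℕ} {f : Fin n → Fin n} (hf : Function.Injective f)
    (k : Fin n) : ∃ q ≤ k, k ≤ f q := by
  by_contra! h
  have hsub : (Iic k).image f ⊆ Iio k := by
    rintro _ hx
    obtain ⟨q, hq, rfl⟩ := mem_image.1 hx
    exact mem_Iio.2 (h q (mem_Iic.1 hq))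
  have hcard := card_le_card hsub
  rw [card_image_of_injective _ hf, Fin.card_Iic, Fin.card_Iio] at hcard
  omega

theorem Monotone.le_sup'_Iic_comp_perm {n : ℕ} {β : Type*} [LinearOrder β] {α : Fin n → β}
    (hα : Monotone α) (σ : Equiv.Perm (Fin n)) (k : Fin n) :
    α k ≤ (Iic k).sup' ⟨k, mem_Iic.2 le_rfl⟩ (fun q => α (σ q)) := by
  obtain ⟨q, hqk, hkq⟩ := Fin.exists_le_apply_of_injective σ.injective k
  exact (hα hkq).trans (le_sup' (fun q => α (σ q)) (mem_Iic.2 hqk))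

theorem identity_minimises_sum_prefix_max_general
    (n : ℕ) (α : Fin n → ℝ) (hα : StrictMono α)
    (σ : Equiv.Perm (Fin n)) :
    (∑ k : Fin n,
        (Finset.Iic k).sup' ⟨k, Finset.mem_Iic.2 le_rfl⟩ (fun q => α (σ q)))
      ≥ ∑ k : Fin n, α k :=
  sum_le_sum fun k _ => hα.monotone.le_sup'_Iic_comp_perm σ k

/-- The single-path core of Lemma 1 of the paper: `α s` is the arrival time of
the packet sent in slot `s` (strictly increasing: no reordering within a path),
`σ` assigns packet indices to slots, and the prefix maximum is the in-order
delivery time of packet `k`. Sending packets in ascending order (the identity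
permutation) minimises the total in-order delivery delay. -/
theorem identity_minimises_sum_prefix_max
    (n : ℕ) (hn : 0 < n) (α : Fin n → ℝ) (hα : StrictMono α)
    (σ : Equiv.Perm (Fin n)) :
    (∑ k : Fin n,
        (Finset.Iic k).sup' ⟨k, Finset.mem_Iic.2 le_rfl⟩ (fun q => α (σ q)))
      ≥ ∑ k : Fin n, α k :=
  identity_minimises_sum_prefix_max_general n α hα σ
end

section
/- Let n be a positive integer, α : Fin n → ℝ strictly increasing, and let i < j be two indices in Fin n. Let σ be the transposition swapping i and j. Then the sum over k ∈ Fin n of max{α(σ(q)) : q ≤ k} is strictly greater than the sum over k ∈ Fin n of α(k). In particular, for each k with i ≤ k < j one has max{α(σ(q)) : q ≤ k} = α(j) > α(k). -/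
/-- The strict-inequality step in the proof of Lemma 1 of the paper: swapping
the transmission slots of two packets `i < j` (so they are sent in
non-ascending index order) strictly increases the total in-order delivery
delay relative to ascending order. Moreover, for each `k` with `i ≤ k < j`,
the in-order delivery time of packet `k` becomes `α j > α k`. -/
theorem swap_strictly_increases_sum_prefix_max
    (n : ℕ) (hn : 0 < n) (α : Fin n → ℝ) (hα : StrictMono α)
    (i j : Fin n) (hij : i < j) :
    ((∑ k : Fin n,
        (Finset.Iic k).sup' ⟨k, Finset.mem_Iic.2 le_rfl⟩
          (fun q => α (Equiv.swap i j q)))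
      > ∑ k : Fin n, α k)
    ∧ ∀ k : Fin n, i ≤ k → k < j →
        (Finset.Iic k).sup' ⟨k, Finset.mem_Iic.2 le_rfl⟩
            (fun q => α (Equiv.swap i j q)) = α j
          ∧ α j > α k := by
  set f : Fin n → ℝ := fun k =>
    (Finset.Iic k).sup' ⟨k, Finset.mem_Iic.2 le_rfl⟩
      (fun q => α (Equiv.swap i j q)) with hf
  have hsecond : ∀ k : Fin n, i ≤ k → k < j → f k = α j ∧ α j > α k := by
    intro k hik hkj
    have hkj' : α k < α j := hα hkj
    refine ⟨le_antisymm ?_ ?_, hkj'⟩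
    · apply Finset.sup'_le
      intro q hq
      have hq' : q ≤ k := Finset.mem_Iic.1 hq
      have hqj : q ≠ j := fun h => absurd (h ▸ hq') (not_le.2 hkj)
      by_cases hqi : q = i
      · simp [hqi]
      · rw [Equiv.swap_apply_of_ne_of_ne hqi hqj]
        exact hα.monotone (le_of_lt (lt_of_le_of_lt hq' hkj))
    · have : α (Equiv.swap i j i) ≤ f k :=
        Finset.le_sup' (fun q => α (Equiv.swap i j q)) (Finset.mem_Iic.2 hik)
      simpa using this
  have hle : ∀ k : Fin n, α k ≤ f k := by
    intro k
    rcases lt_or_ge k i with hki | hik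
    · have hki' : k ≠ i := ne_of_lt hki
      have hkj' : k ≠ j := ne_of_lt (lt_trans hki hij)
      have : α (Equiv.swap i j k) ≤ f k :=
        Finset.le_sup' (fun q => α (Equiv.swap i j q)) (Finset.mem_Iic.2 le_rfl)
      rwa [Equiv.swap_apply_of_ne_of_ne hki' hkj'] at this
    · rcases le_or_gt k j with hkj | hjk
      · have : α (Equiv.swap i j i) ≤ f k :=
          Finset.le_sup' (fun q => α (Equiv.swap i j q)) (Finset.mem_Iic.2 hik)
        rw [Equiv.swap_apply_left] at this
        exact le_trans (hα.monotone hkj) this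
      · have hki' : k ≠ i := ne_of_gt (lt_trans hij hjk)
        have hkj' : k ≠ j := ne_of_gt hjk
        have : α (Equiv.swap i j k) ≤ f k :=
          Finset.le_sup' (fun q => α (Equiv.swap i j q)) (Finset.mem_Iic.2 le_rfl)
        rwa [Equiv.swap_apply_of_ne_of_ne hki' hkj'] at this
  refine ⟨?_, hsecond⟩
  apply Finset.sum_lt_sum
  · intro k _; exact hle k
  · refine ⟨i, Finset.mem_univ _, ?_⟩
    have := hsecond i le_rfl hij
    show α i < f i
    rw [this.1]
    exact this.2
end

section
/- Let P be a positive integer, ε : Fin P → ℝ with 0 ≤ ε_p ≤ 1 for all p, and N : Fin P → ℕ with Σ_p N_p ≥ 1, and suppose Σ_p N_p · ε_p < 1. Let (X_{p,i})_{p ∈ Fin P, i ∈ ℕ} be a family of independent {0,1}-valued random variables with P(X_{p,i} = 1) = ε_p, and for k ≥ 1 set E_k = Σ_p Σ_{i < k·N_p} X_{p,i}. Then Σ_{k=1}^∞ P(E_k > k) < ∞. Consequently, any random variable S taking values in the natural numbers and satisfying P(S > k) ≤ P(E_k > k) for all k ≥ 1 has finite expectation. -/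
/-!
The erasure count `E_k` is a sum of `k · Σ_p N_p` independent Bernoulli variables with mean
`k · c₀`, where `c₀ = Σ_p N_p ε_p < 1`. For `c ∈ (0, 1)` with `c₀ ≤ c`, Chernoff's bound with the
exponential moment at `t = -log c` gives `P(E_k ≥ k) ≤ (c · e^{1 - c})^k`, and `c · e^{1 - c} < 1`
because `log c < c - 1`. So the tail probabilities decay geometrically, and
`E[S] = Σ_k P(S > k)` is finite.
-/

open MeasureTheory ProbabilityTheory ENNReal Real Finset

section

variable {Ω : Type*} [MeasurableSpace Ω] {μ : Measure Ω}

theorem lintegral_natCast_eq_tsum_measure_lt {S : Ω → ℕ} (hS : Measurable S) :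
    ∫⁻ ω, (S ω : ℝ≥0∞) ∂μ = ∑' k : ℕ, μ {ω | k < S ω} := by
  have hset : ∀ k, MeasurableSet {ω | k < S ω} := fun k => hS measurableSet_Ioi
  have hpt : ∀ ω, (S ω : ℝ≥0∞) = ∑' k : ℕ, {ω | k < S ω}.indicator 1 ω := by
    intro ω
    rw [tsum_eq_sum (s := range (S ω)) (by simp [Set.indicator_apply]),
      sum_congr rfl fun k hk => show _ = (1 : ℝ≥0∞) by simp [mem_range.mp hk]]
    simp
  simp_rw [hpt]
  rw [lintegral_tsum fun k => (measurable_one.indicator (hset k)).aemeasurable]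
  simp [lintegral_indicator_one (hset _)]

theorem mgf_of_mem_zero_one [IsProbabilityMeasure μ] {X : Ω → ℝ} (hX : Measurable X)
    (hval : ∀ ω, X ω = 0 ∨ X ω = 1) (t : ℝ) :
    mgf X μ t = 1 + μ.real {ω | X ω = 1} * (exp t - 1) := by
  have hset : MeasurableSet {ω | X ω = 1} := hX (measurableSet_singleton 1)
  have hexp : (fun ω => exp (t * X ω))
      = fun ω => 1 + {ω | X ω = 1}.indicator (fun _ => exp t - 1) ω := by
    ext ω
    rcases hval ω with h | h <;> simp [h]
  rw [mgf, hexp, integral_add (integrable_const 1) ((integrable_const _).indicator hset),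
    integral_indicator_const _ hset]
  simp

variable {ι : Type*} {X : ι → Ω → ℝ}

theorem measure_sum_ge_le_of_mem_zero_one (hmeas : ∀ i, Measurable (X i))
    (hindep : iIndepFun X μ) (hval : ∀ i ω, X i ω = 0 ∨ X i ω = 1) (T : Finset ι) {t : ℝ}
    (ht : 0 ≤ t) (a : ℝ) :
    μ.real {ω | a ≤ ∑ i ∈ T, X i ω}
      ≤ exp (-t * a + (∑ i ∈ T, μ.real {ω | X i ω = 1}) * (exp t - 1)) := by
  have := hindep.isProbabilityMeasure
  have hint : Integrable (fun ω => exp (t * (∑ i ∈ T, X i) ω)) μ :=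
    hindep.integrable_exp_mul_sum hmeas fun i _ => integrable_exp_mul_of_le t 1 ht
      (hmeas i).aemeasurable (ae_of_all _ fun ω => by rcases hval i ω with h | h <;> simp [h])
  have hmgf : ∀ i ∈ T, mgf (X i) μ t ≤ exp (μ.real {ω | X i ω = 1} * (exp t - 1)) :=
    fun i _ => by
      rw [mgf_of_mem_zero_one (hmeas i) (hval i)]
      linarith [add_one_le_exp (μ.real {ω | X i ω = 1} * (exp t - 1))]
  calc μ.real {ω | a ≤ ∑ i ∈ T, X i ω}
      ≤ exp (-t * a) * ∏ i ∈ T, mgf (X i) μ t := by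
        simpa only [Finset.sum_apply, hindep.mgf_sum hmeas] using
          measure_ge_le_exp_mul_mgf a ht hint
    _ ≤ exp (-t * a) * ∏ i ∈ T, exp (μ.real {ω | X i ω = 1} * (exp t - 1)) := by
        gcongr with i hi
        exacts [fun i _ => mgf_nonneg, hmgf i hi]
    _ = exp (-t * a + (∑ i ∈ T, μ.real {ω | X i ω = 1}) * (exp t - 1)) := by
        rw [← exp_sum, ← exp_add, sum_mul]

/-- Chernoff's bound at `t = -log c`. -/
theorem measure_sum_ge_le_of_sum_le_mul (hmeas : ∀ i, Measurable (X i))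
    (hindep : iIndepFun X μ) (hval : ∀ i ω, X i ω = 0 ∨ X i ω = 1) (T : Finset ι) {c a : ℝ}
    (hc0 : 0 < c) (hc1 : c < 1) (hmean : ∑ i ∈ T, μ.real {ω | X i ω = 1} ≤ c * a) :
    μ.real {ω | a ≤ ∑ i ∈ T, X i ω} ≤ exp (-(c - 1 - log c) * a) := by
  have ht : 0 ≤ -log c := neg_nonneg.mpr (log_nonpos hc0.le hc1.le)
  have hexp : exp (-log c) = c⁻¹ := by rw [exp_neg, exp_log hc0]
  have hgap : 0 ≤ c⁻¹ - 1 := sub_nonneg.mpr (one_le_inv₀ hc0 |>.mpr hc1.le)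
  refine (measure_sum_ge_le_of_mem_zero_one hmeas hindep hval T ht a).trans ?_
  rw [exp_le_exp, hexp]
  have hc : c * a * (c⁻¹ - 1) = a * (1 - c) := by field_simp
  linarith [mul_le_mul_of_nonneg_right hmean hgap]

end

theorem measure_frames_erasures_gt_le {Ω : Type*} [MeasurableSpace Ω] {μ : Measure Ω} {P : ℕ}
    {ε : Fin P → ℝ} (hε0 : ∀ p, 0 ≤ ε p) {N : Fin P → ℕ} {X : Fin P × ℕ → Ω → ℝ}
    (hmeas : ∀ pi, Measurable (X pi)) (hindep : iIndepFun X μ)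
    (hval : ∀ pi ω, X pi ω = 0 ∨ X pi ω = 1)
    (hprob : ∀ pi, μ {ω | X pi ω = 1} = ENNReal.ofReal (ε pi.1)) {c : ℝ} (hc0 : 0 < c)
    (hc1 : c < 1) (hcap : ∑ p, (N p : ℝ) * ε p ≤ c) (k : ℕ) :
    μ {ω | (k : ℝ) < ∑ p, ∑ i ∈ range (k * N p), X (p, i) ω}
      ≤ ENNReal.ofReal (exp (-(c - 1 - log c))) ^ k := by
  have := hindep.isProbabilityMeasure
  set T : Finset (Fin P × ℕ) :=
    (univ.sigma fun p => range (k * N p)).map (Equiv.sigmaEquivProd _ _).toEmbedding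
  have hsum : ∀ f : Fin P × ℕ → ℝ, ∑ x ∈ T, f x = ∑ p, ∑ i ∈ range (k * N p), f (p, i) := by
    intro f
    simp [T, sum_sigma]
  have hmean : ∑ x ∈ T, μ.real {ω | X x ω = 1} ≤ c * k := by
    simp only [hsum, measureReal_def, hprob, toReal_ofReal (hε0 _), sum_const, card_range,
      nsmul_eq_mul, Nat.cast_mul, mul_assoc, ← mul_sum]
    rw [mul_comm c]
    exact mul_le_mul_of_nonneg_left hcap k.cast_nonneg
  calc μ {ω | (k : ℝ) < ∑ p, ∑ i ∈ range (k * N p), X (p, i) ω}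
      ≤ μ {ω | (k : ℝ) ≤ ∑ x ∈ T, X x ω} :=
        measure_mono fun ω hω => by simpa only [Set.mem_ofPred_eq, hsum] using hω.le
    _ = ENNReal.ofReal (μ.real {ω | (k : ℝ) ≤ ∑ x ∈ T, X x ω}) :=
        (ofReal_measureReal (measure_ne_top _ _)).symm
    _ ≤ ENNReal.ofReal (exp (-(c - 1 - log c) * k)) :=
        ENNReal.ofReal_le_ofReal
          (measure_sum_ge_le_of_sum_le_mul hmeas hindep hval T hc0 hc1 hmean)
    _ = ENNReal.ofReal (exp (-(c - 1 - log c))) ^ k := by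
        rw [← ENNReal.ofReal_pow (exp_nonneg _), ← exp_nat_mul, mul_comm]

theorem S_process_finite_mean_general
    {Ω : Type*} [MeasurableSpace Ω] (μ : Measure Ω) [IsProbabilityMeasure μ]
    (P : ℕ) (ε : Fin P → ℝ)
    (hε0 : ∀ p, 0 ≤ ε p)
    (N : Fin P → ℕ)
    (hcap : ∑ p : Fin P, (N p : ℝ) * ε p < 1)
    (X : Fin P × ℕ → Ω → ℝ)
    (hmeas : ∀ pi, Measurable (X pi))
    (hindep : iIndepFun X μ)
    (hval : ∀ pi ω, X pi ω = 0 ∨ X pi ω = 1)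
    (hprob : ∀ pi, μ {ω | X pi ω = 1} = ENNReal.ofReal (ε pi.1)) :
    (∑' k : ℕ,
        μ {ω | ((k + 1 : ℕ) : ℝ) <
            ∑ p : Fin P, ∑ i ∈ Finset.range ((k + 1) * N p), X (p, i) ω} < ⊤)
    ∧ ∀ S : Ω → ℕ, Measurable S →
        (∀ k : ℕ, 1 ≤ k →
          μ {ω | k < S ω} ≤
            μ {ω | (k : ℝ) < ∑ p : Fin P, ∑ i ∈ Finset.range (k * N p), X (p, i) ω}) →
        (∫⁻ ω, (S ω : ℝ≥0∞) ∂μ) < ⊤ := by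
  set c := max (∑ p, (N p : ℝ) * ε p) (1 / 2)
  have hc0 : 0 < c := lt_max_of_lt_right one_half_pos
  have hc1 : c < 1 := max_lt hcap one_half_lt_one
  set r := ENNReal.ofReal (exp (-(c - 1 - log c)))
  have hr : r < 1 := by
    rw [ENNReal.ofReal_lt_one, exp_lt_one_iff]
    linarith [log_lt_sub_one_of_pos hc0 hc1.ne]
  have tail := measure_frames_erasures_gt_le hε0 hmeas hindep hval hprob hc0 hc1 (le_max_left _ _)
  have summable_tail : ∑' k : ℕ, μ {ω | ((k + 1 : ℕ) : ℝ) <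
      ∑ p, ∑ i ∈ range ((k + 1) * N p), X (p, i) ω} < ⊤ :=
    (ENNReal.tsum_le_tsum fun k => tail (k + 1)).trans_lt <| by
      rw [ENNReal.tsum_geometric_add_one]
      exact ENNReal.mul_lt_top (hr.trans one_lt_top) (inv_lt_top.mpr (tsub_pos_of_lt hr))
  refine ⟨summable_tail, fun S hS hSle => ?_⟩
  rw [lintegral_natCast_eq_tsum_measure_lt hS, tsum_eq_zero_add' ENNReal.summable]
  exact ENNReal.add_lt_top.mpr ⟨measure_lt_top _ _,
    (ENNReal.tsum_le_tsum fun k => hSle (k + 1) k.succ_pos).trans_lt summable_tail⟩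

/-- Theorem 2, part 1 of the paper (finiteness of the mean of the S process).
`X (p, i)` are independent Bernoulli(`ε p`) erasure indicators; the erasure
count of the first `k` frames is `E_k = Σ_p Σ_{i < k·N_p} X (p, i)`. If the
rate is below capacity, `Σ_p N_p ε_p < 1`, then `Σ_{k≥1} P(E_k > k) < ∞`, and
consequently any ℕ-valued random variable `S` with `P(S > k) ≤ P(E_k > k)` for
all `k ≥ 1` has finite expectation. -/
theorem S_process_finite_mean
    {Ω : Type*} [MeasurableSpace Ω] (μ : Measure Ω) [IsProbabilityMeasure μ]
    (P : ℕ) (hP : 0 < P) (ε : Fin P → ℝ)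
    (hε0 : ∀ p, 0 ≤ ε p) (hε1 : ∀ p, ε p ≤ 1)
    (N : Fin P → ℕ) (hN : 1 ≤ ∑ p : Fin P, N p)
    (hcap : ∑ p : Fin P, (N p : ℝ) * ε p < 1)
    (X : Fin P × ℕ → Ω → ℝ)
    (hmeas : ∀ pi, Measurable (X pi))
    (hindep : iIndepFun X μ)
    (hval : ∀ pi ω, X pi ω = 0 ∨ X pi ω = 1)
    (hprob : ∀ pi, μ {ω | X pi ω = 1} = ENNReal.ofReal (ε pi.1)) :
    (∑' k : ℕ,
        μ {ω | ((k + 1 : ℕ) : ℝ) <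
            ∑ p : Fin P, ∑ i ∈ Finset.range ((k + 1) * N p), X (p, i) ω} < ⊤)
    ∧ ∀ S : Ω → ℕ, Measurable S →
        (∀ k : ℕ, 1 ≤ k →
          μ {ω | k < S ω} ≤
            μ {ω | (k : ℝ) < ∑ p : Fin P, ∑ i ∈ Finset.range (k * N p), X (p, i) ω}) →
        (∫⁻ ω, (S ω : ℝ≥0∞) ∂μ) < ⊤ :=
  S_process_finite_mean_general μ P ε hε0 N hcap X hmeas hindep hval hprob
end

section
/- For all natural numbers τ ≥ 2 and k ≥ 2, k · Σ_{r=2}^{min(k,τ)} (r − 1) · C(τ, r) · C(τ·(k − 1), k − r) = (τ − 1) · (k − 1) · C((k − 1)·τ, k − 1), where C(n, m) denotes the binomial coefficient. -/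
/-!
Among `k` items drawn from `τk` items of which `τ` are marked, on average exactly one is marked
(hypergeometric mean), i.e. `Σ_r r·C(τ,r)·C(τ(k-1),k-r) = Σ_r C(τ,r)·C(τ(k-1),k-r)`.
Hence `Σ_r (r-1)·C(τ,r)·C(τ(k-1),k-r)`, with `r - 1` truncated to `0` at `r = 0`, equals the
missing `r = 0` term `C(τ(k-1),k)`; finally `k·C(n,k) = (n-k+1)·C(n,k-1)`.
-/

open Finset

namespace Nat

theorem sum_range_choose_mul_choose (a b k : ℕ) :
    ∑ r ∈ range (k + 1), a.choose r * b.choose (k - r) = (a + b).choose k := by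
  rw [add_choose_eq, Finset.Nat.sum_antidiagonal_eq_sum_range_succ_mk]

theorem sum_range_mul_choose_mul_choose_succ (a b k : ℕ) :
    ∑ r ∈ range (k + 2), r * ((a + 1).choose r * b.choose (k + 1 - r)) =
      (a + 1) * (a + b).choose k := by
  rw [sum_range_succ', zero_mul, add_zero, ← sum_range_choose_mul_choose, mul_sum]
  refine sum_congr rfl fun r _ => ?_
  rw [Nat.add_sub_add_right, ← mul_assoc, mul_comm (r + 1), ← add_one_mul_choose_eq, mul_assoc]

theorem add_mul_sum_range_mul_choose_mul_choose (a b k : ℕ) :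
    (a + b) * ∑ r ∈ range (k + 1), r * (a.choose r * b.choose (k - r)) =
      a * k * (a + b).choose k := by
  rcases a with _ | a
  · rw [sum_eq_zero fun r _ => ?_, mul_zero, zero_mul, zero_mul]
    rcases r with _ | r <;> simp
  rcases k with _ | k
  · simp
  rw [sum_range_mul_choose_mul_choose_succ, show a + 1 + b = a + b + 1 by ring,
    ← mul_assoc, mul_comm (a + b + 1), mul_assoc, add_one_mul_choose_eq]
  ring

theorem sum_range_pred_mul_add_sum (n : ℕ) (f : ℕ → ℕ) :
    ∑ r ∈ range (n + 1), (r - 1) * f r + ∑ r ∈ range (n + 1), f r =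
      ∑ r ∈ range (n + 1), r * f r + f 0 := by
  simp only [sum_range_succ', add_tsub_cancel_right, zero_tsub, zero_mul, add_zero, add_mul,
    one_mul, sum_add_distrib]
  ring

theorem sum_Icc_two_min_pred_mul_choose (a k : ℕ) (g : ℕ → ℕ) :
    ∑ r ∈ Icc 2 (min k a), (r - 1) * a.choose r * g r =
      ∑ r ∈ range (k + 1), (r - 1) * a.choose r * g r := by
  refine sum_subset (fun r hr => ?_) fun r hr hr' => ?_
  · simp only [mem_Icc, mem_range] at hr ⊢; omega
  · simp only [mem_Icc, mem_range, not_and, not_le, le_min_iff] at hr hr'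
    rcases Nat.lt_or_ge r 2 with h | h
    · interval_cases r <;> simp
    · simp [choose_eq_zero_of_lt (by omega : a < r)]

end Nat

/-- The combinatorial identity underlying the closed-form tail approximation of
the S distribution in Theorem 2, part 2 of the paper:
`k · Σ_{r=2}^{min(k,τ)} (r − 1)·C(τ, r)·C(τ(k−1), k−r)
  = (τ − 1)·(k − 1)·C((k−1)τ, k−1)` for all `τ, k ≥ 2`. -/
theorem tail_binomial_identity (τ k : ℕ) (hτ : 2 ≤ τ) (hk : 2 ≤ k) :
    k * ∑ r ∈ Finset.Icc 2 (min k τ),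
        (r - 1) * Nat.choose τ r * Nat.choose (τ * (k - 1)) (k - r)
      = (τ - 1) * (k - 1) * Nat.choose ((k - 1) * τ) (k - 1) := by
  obtain ⟨j, rfl⟩ : ∃ j, k = j + 1 := ⟨k - 1, by omega⟩
  rw [add_tsub_cancel_right, mul_comm j τ]
  have htotal : τ + τ * j = τ * (j + 1) := by ring
  have hmean : ∑ r ∈ range (j + 2), r * (τ.choose r * (τ * j).choose (j + 1 - r)) =
      ∑ r ∈ range (j + 2), τ.choose r * (τ * j).choose (j + 1 - r) := by
    have h := Nat.add_mul_sum_range_mul_choose_mul_choose τ (τ * j) (j + 1)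
    rw [← Nat.sum_range_choose_mul_choose, htotal] at h
    exact Nat.eq_of_mul_eq_mul_left (Nat.mul_pos (by omega) j.succ_pos) h
  have htail : ∑ r ∈ Icc 2 (min (j + 1) τ), (r - 1) * τ.choose r * (τ * j).choose (j + 1 - r) =
      (τ * j).choose (j + 1) := by
    have h := Nat.sum_range_pred_mul_add_sum (j + 1) fun r =>
      τ.choose r * (τ * j).choose (j + 1 - r)
    rw [hmean, add_comm _ (_ * _), Nat.choose_zero_right, one_mul, Nat.sub_zero] at h
    rw [Nat.sum_Icc_two_min_pred_mul_choose]
    simpa only [mul_assoc] using Nat.add_right_cancel h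
  rw [htail, mul_comm, Nat.choose_succ_right_eq, ← Nat.sub_one_mul]
  ring
end

section
/- For every real ε with 0 ≤ ε ≤ 1 and all natural numbers τ ≥ 2 and k ≥ 2, Σ_{r=2}^{min(k,τ)} [C(τ, r)·ε^r·(1 − ε)^{τ − r}] · ((r − 1)/(k − 1)) · [C(τ·(k − 1), k − r)·ε^{k − r}·(1 − ε)^{τ(k−1) − (k − r)}] = ((τ − 1)/k) · ε^k · (1 − ε)^{k·(τ − 1)} · C((k − 1)·τ, k − 1), where C(n, m) denotes the binomial coefficient and the left-hand side sum is over integers r with 2 ≤ r ≤ min(k, τ). -/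
/-!
Multiplying the two binomial probabilities gives `C(τ,r) C(τ(k-1),k-r) ε^k (1-ε)^(k(τ-1))`,
so the claim is an identity between binomial coefficients. By Vandermonde and its weighted form,
`∑ r C(τ,r) C(τ(k-1),k-r)` and `∑ C(τ,r) C(τ(k-1),k-r)` both equal `C(τk,k)`: drawing `k` out of
`τk` balls of which `τ` are marked, the expected number of marked balls is `1`. Hence
`∑_{r ≥ 2} (r-1) C(τ,r) C(τ(k-1),k-r)` equals minus the `r = 0` term, `C(τ(k-1),k)`, and
`C(τ(k-1),k) = (k-1)(τ-1)/k · C(τ(k-1),k-1)`.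
-/

open Finset

theorem binomial_term_mul_binomial_term {R : Type*} [CommRing R] (ε : R) {a b r k : ℕ}
    (hra : r ≤ a) (hrk : r ≤ k) (hkb : k - r ≤ b) :
    (a.choose r * ε ^ r * (1 - ε) ^ (a - r)) *
        (b.choose (k - r) * ε ^ (k - r) * (1 - ε) ^ (b - (k - r))) =
      a.choose r * b.choose (k - r) * (ε ^ k * (1 - ε) ^ (a + b - k)) := by
  have hε : ε ^ r * ε ^ (k - r) = ε ^ k := by rw [← pow_add, Nat.add_sub_cancel' hrk]
  have h1ε : (1 - ε) ^ (a - r) * (1 - ε) ^ (b - (k - r)) = (1 - ε) ^ (a + b - k) := by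
    rw [← pow_add]
    congr 1
    omega
  rw [← hε, ← h1ε]
  ring

namespace Nat

theorem add_mul_sub_one (τ : ℕ) {k : ℕ} (hk : 0 < k) : τ + τ * (k - 1) = τ * k := by
  rw [add_comm, ← mul_add_one, Nat.sub_add_cancel hk]

theorem sum_range_mul_choose_mul_choose (m n k : ℕ) :
    ∑ r ∈ range (k + 2), r * ((m + 1).choose r * n.choose (k + 1 - r)) =
      (m + 1) * (m + n).choose k := by
  rw [sum_range_succ', add_choose_eq m n k, Finset.Nat.sum_antidiagonal_eq_sum_range_succ_mk,
    mul_sum]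
  simp only [zero_mul, add_zero]
  refine sum_congr rfl fun r _ => ?_
  rw [Nat.add_sub_add_right, ← mul_assoc, ← mul_assoc, mul_comm (r + 1),
    ← add_one_mul_choose_eq]

theorem sum_range_mul_choose_mul_choose_mul_sub_one {τ k : ℕ} (hτ : 0 < τ) (hk : 0 < k) :
    ∑ r ∈ range (k + 1), r * (τ.choose r * (τ * (k - 1)).choose (k - r)) = (τ * k).choose k := by
  obtain ⟨t, rfl⟩ := exists_eq_add_one.mpr hτ
  obtain ⟨j, rfl⟩ := exists_eq_add_one.mpr hk
  simp only [add_tsub_cancel_right]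
  have h := add_one_mul_choose_eq (t + (t + 1) * j) j
  rw [show t + (t + 1) * j + 1 = (t + 1) * (j + 1) by ring] at h
  rw [sum_range_mul_choose_mul_choose]
  apply Nat.eq_of_mul_eq_mul_right (add_one_pos j)
  rw [← h]
  ring

theorem choose_mul_sub_one_mul {τ k : ℕ} (hk : 0 < k) :
    (τ * (k - 1)).choose k * k = ((k - 1) * τ).choose (k - 1) * ((k - 1) * (τ - 1)) := by
  obtain ⟨j, rfl⟩ := exists_eq_add_one.mpr hk
  simp only [add_tsub_cancel_right]
  rw [choose_succ_right_eq, mul_comm j τ, Nat.mul_sub_one, mul_comm j τ]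

end Nat

theorem sum_Icc_two_sub_one_mul_choose_mul_choose {τ k : ℕ} (hτ : 0 < τ) (hk : 0 < k) :
    ∑ r ∈ Icc 2 k, ((r : ℝ) - 1) * τ.choose r * (τ * (k - 1)).choose (k - r) =
      (τ * (k - 1)).choose k := by
  have hmean : ∑ r ∈ range (k + 1), (r : ℝ) * (τ.choose r * (τ * (k - 1)).choose (k - r)) =
      ∑ r ∈ range (k + 1), (τ.choose r * (τ * (k - 1)).choose (k - r) : ℝ) := by
    have hvand := Nat.add_choose_eq τ (τ * (k - 1)) k
    rw [Nat.add_mul_sub_one τ hk, Finset.Nat.sum_antidiagonal_eq_sum_range_succ_mk] at hvand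
    exact_mod_cast (Nat.sum_range_mul_choose_mul_choose_mul_sub_one hτ hk).trans hvand
  have hzero :
      ∑ r ∈ range (k + 1), ((r : ℝ) - 1) * τ.choose r * (τ * (k - 1)).choose (k - r) = 0 := by
    simp only [sub_mul, one_mul, sum_sub_distrib, mul_assoc, hmean, sub_self]
  rw [← sum_range_add_sum_Ico _ (by omega : 2 ≤ k + 1), Ico_add_one_right_eq_Icc] at hzero
  simp only [sum_range_succ, range_one, sum_singleton, CharP.cast_eq_zero, zero_sub,
    Nat.choose_zero_right, Nat.cast_one, mul_one, tsub_zero, neg_mul, one_mul, sub_self,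
    Nat.choose_one_right, zero_mul, add_zero] at hzero
  linarith

theorem tail_closed_form_general (ε : ℝ)
    (τ k : ℕ) (hτ : 2 ≤ τ) (hk : 2 ≤ k) :
    ∑ r ∈ Finset.Icc 2 (min k τ),
        ((Nat.choose τ r : ℝ) * ε ^ r * (1 - ε) ^ (τ - r))
          * (((r : ℝ) - 1) / ((k : ℝ) - 1))
          * ((Nat.choose (τ * (k - 1)) (k - r) : ℝ) * ε ^ (k - r)
              * (1 - ε) ^ (τ * (k - 1) - (k - r)))
      = (((τ : ℝ) - 1) / (k : ℝ)) * ε ^ k * (1 - ε) ^ (k * (τ - 1))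
          * (Nat.choose ((k - 1) * τ) (k - 1) : ℝ) := by
  have hexp : τ + τ * (k - 1) - k = k * (τ - 1) := by
    rw [Nat.add_mul_sub_one τ (by omega), mul_comm, Nat.mul_sub_one]
  set c := ε ^ k * (1 - ε) ^ (k * (τ - 1)) / ((k : ℝ) - 1)
  calc _ = ∑ r ∈ Icc 2 k, c * (((r : ℝ) - 1) * τ.choose r * (τ * (k - 1)).choose (k - r)) := by
        rw [← sum_subset (Icc_subset_Icc_right (min_le_left k τ))]
        · refine sum_congr rfl fun r hr => ?_
          rw [mem_Icc, le_min_iff] at hr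
          have hkr : k - r ≤ τ * (k - 1) :=
            (Nat.sub_le_sub_left (by omega : 1 ≤ r) k).trans (Nat.le_mul_of_pos_left _ (by omega))
          rw [mul_right_comm, binomial_term_mul_binomial_term ε hr.2.2 hr.2.1 hkr, hexp]
          ring
        · intro r hrk hrτ
          rw [mem_Icc] at hrk
          rw [mem_Icc, le_min_iff] at hrτ
          simp [Nat.choose_eq_zero_of_lt (show τ < r by omega)]
    _ = c * (τ * (k - 1)).choose k := by
        rw [← mul_sum, sum_Icc_two_sub_one_mul_choose_mul_choose (by omega) (by omega)]
    _ = _ := by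
        have hk1 : (k : ℝ) - 1 ≠ 0 := by
          have : (2 : ℝ) ≤ k := by exact_mod_cast hk
          linarith
        have h : ((τ * (k - 1)).choose k : ℝ) * k =
            ((k - 1) * τ).choose (k - 1) * (((k : ℝ) - 1) * ((τ : ℝ) - 1)) := by
          rw [← Nat.cast_pred (by omega), ← Nat.cast_pred (by omega)]
          exact_mod_cast Nat.choose_mul_sub_one_mul (τ := τ) (by omega : 0 < k)
        simp only [c]
        field_simp
        linear_combination (ε ^ k * (1 - ε) ^ (k * (τ - 1))) * h

/-- The equality between equations (18) and (19) in the proof of Theorem 2,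
part 2 of the paper:
`Σ_{r=2}^{min(k,τ)} P(B(ε,τ) = r)·((r−1)/(k−1))·P(B(ε,τ(k−1)) = k−r)
  = ((τ−1)/k)·ε^k·(1−ε)^{k(τ−1)}·C((k−1)τ, k−1)`
where `P(B(ε,n) = m) = C(n,m)·ε^m·(1−ε)^{n−m}` is the binomial probability. -/
theorem tail_closed_form (ε : ℝ) (hε0 : 0 ≤ ε) (hε1 : ε ≤ 1)
    (τ k : ℕ) (hτ : 2 ≤ τ) (hk : 2 ≤ k) :
    ∑ r ∈ Finset.Icc 2 (min k τ),
        ((Nat.choose τ r : ℝ) * ε ^ r * (1 - ε) ^ (τ - r))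
          * (((r : ℝ) - 1) / ((k : ℝ) - 1))
          * ((Nat.choose (τ * (k - 1)) (k - r) : ℝ) * ε ^ (k - r)
              * (1 - ε) ^ (τ * (k - 1) - (k - r)))
      = (((τ : ℝ) - 1) / (k : ℝ)) * ε ^ k * (1 - ε) ^ (k * (τ - 1))
          * (Nat.choose ((k - 1) * τ) (k - 1) : ℝ) :=
  tail_closed_form_general ε τ k hτ hk
end
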